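/- Let L be a finitely generated field extension of ℂ equipped with a Poisson bracket {·,·} (a ℂ-bilinear antisymmetric map satisfying the Jacobi identity and the Leibniz rule in each argument). Suppose there exist elements f_1, …, f_m ∈ L such that the Hamiltonian derivations {f_1, ·}, …, {f_m, ·} of L are linearly independent over L. Then the transcendence degree over ℂ of the Poisson center Z(L) = {a ∈ L : {a,b} = 0 for all b ∈ L} is at most trdeg_ℂ(L) - m. -/

import Mathlib

noncomputable def trdeg (R A : Type*) [CommRing R] [CommRing A] [Algebra R A] : Cardinal :=
  ⨆ s : { s : Set A // AlgebraicIndependent R ((↑) : s → A) }, Cardinal.mk s.1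

/-!
The Hamiltonian derivations `{f_j, ·}` are derivations of `L` over the Poisson center `F`. Their
linear independence over `L` yields points `t_1, …, t_m` with `det ({f_j, t_i}) ≠ 0`, and such a
Jacobian condition forces `t` to be algebraically independent over `F`: applying the derivations
to a relation `P(t) = 0` of least degree gives `(∂_i P)(t) = 0`, so every `∂_i P` vanishes and, in
characteristic zero, `P` is a constant. Hence `m ≤ trdeg_F L`, and the tower inequality
`trdeg_ℂ F + trdeg_F L ≤ trdeg_ℂ L` concludes.
-/

open MvPolynomial

namespace MvPolynomial

variable {R σ : Type*}

theorem totalDegree_pderiv_le [CommSemiring R] (P : MvPolynomial σ R) (i : σ) :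
    (pderiv i P).totalDegree ≤ P.totalDegree - 1 := by
  classical
  refine Finset.sup_le fun s hs => ?_
  rw [mem_support_iff, coeff_pderiv] at hs
  have hle := le_totalDegree (mem_support_iff.mpr (left_ne_zero_of_mul hs))
  rw [Finsupp.sum_add_index' (fun _ => rfl) fun _ _ _ => rfl, Finsupp.sum_single_index rfl] at hle
  omega

theorem eq_C_of_forall_pderiv_eq_zero [CommRing R] [CharZero R] [NoZeroDivisors R]
    {P : MvPolynomial σ R} (h : ∀ i, pderiv i P = 0) : P = C (P.coeff 0) := by
  classical
  ext s
  rcases eq_or_ne s 0 with rfl | hs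
  · simp
  obtain ⟨i, hi⟩ := Finsupp.ne_iff.mp hs
  have hsplit : s - Finsupp.single i 1 + Finsupp.single i 1 = s :=
    tsub_add_cancel_of_le (Finsupp.single_le_iff.mpr (Nat.pos_of_ne_zero hi))
  have := coeff_pderiv (i := i) P (s - Finsupp.single i 1)
  rw [h, hsplit, coeff_zero] at this
  rw [coeff_C, if_neg (Ne.symm hs)]
  exact (mul_eq_zero.mp this.symm).resolve_right (Nat.cast_add_one_ne_zero _)

end MvPolynomial

theorem Derivation.map_aeval_mvPolynomial {R σ A M : Type*} [CommSemiring R] [CommSemiring A]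
    [Algebra R A] [AddCommMonoid M] [Module A M] [Module R M] [IsScalarTower R A M] [Fintype σ]
    (D : Derivation R A M) (x : σ → A) (P : MvPolynomial σ R) :
    D (aeval x P) = ∑ i, aeval x (pderiv i P) • D (x i) := by
  classical
  induction P using MvPolynomial.induction_on with
  | C a => simp
  | add p q hp hq => simp only [map_add, hp, hq, add_smul, Finset.sum_add_distrib]
  | mul_X p i hp =>
    simp [Derivation.leibniz, pderiv_X, hp, Pi.single_apply, apply_ite (aeval x), add_smul,
      ite_smul, Finset.sum_add_distrib, Finset.smul_sum, mul_smul]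

theorem algebraicIndependent_of_linearIndependent_derivation_apply {K A ι κ : Type*} [Field K]
    [CharZero K] [CommRing A] [Nontrivial A] [Algebra K A] [Fintype ι]
    (D : κ → Derivation K A A) {x : ι → A} (hx : LinearIndependent A fun i j => D j (x i)) :
    AlgebraicIndependent K x := by
  rw [algebraicIndependent_iff_injective_aeval, injective_iff_map_eq_zero]
  have hpderiv (P : MvPolynomial ι K) (hP : aeval x P = 0) (i : ι) :
      aeval x (pderiv i P) = 0 :=
    Fintype.linearIndependent_iff.mp hx _ (funext fun j => by
      simpa [hP] using ((D j).map_aeval_mvPolynomial x P).symm) i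
  have hconst (P : MvPolynomial ι K) (hP : aeval x P = 0) (h : ∀ i, pderiv i P = 0) : P = 0 := by
    rw [eq_C_of_forall_pderiv_eq_zero h, aeval_C, map_eq_zero_iff _ (algebraMap K A).injective]
      at hP
    rw [eq_C_of_forall_pderiv_eq_zero h, hP, C_0]
  suffices ∀ n, ∀ P : MvPolynomial ι K, P.totalDegree ≤ n → aeval x P = 0 → P = 0 from
    fun P => this _ P le_rfl
  intro n
  induction n with
  | zero =>
    intro P hdeg hP
    refine hconst P hP fun i => ?_
    rw [totalDegree_eq_zero_iff_eq_C.mp (Nat.le_zero.mp hdeg), pderiv_C]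
  | succ n ih =>
    intro P hdeg hP
    exact hconst P hP fun i =>
      ih _ ((totalDegree_pderiv_le P i).trans (by omega)) (hpderiv P hP i)

theorem LinearIndependent.exists_linearIndependent_eval {K ι κ : Type*} [Field K] [Fintype κ]
    {v : κ → ι → K} (hv : LinearIndependent K v) :
    ∃ t : κ → ι, LinearIndependent K fun a b => v b (t a) := by
  classical
  set ev : ι → κ → K := fun i b => v b i
  have hspan : Submodule.span K (Set.range ev) = ⊤ := by
    by_contra hne
    obtain ⟨φ, hφ, hker⟩ := Submodule.exists_le_ker_of_lt_top _ (lt_top_iff_ne_top.mpr hne)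
    have hrel : ∑ b, φ (Pi.single b 1) • v b = 0 := funext fun i => by
      have hi : φ (ev i) = 0 := hker (Submodule.subset_span ⟨i, rfl⟩)
      rw [← Finset.univ_sum_single (ev i), map_sum] at hi
      have hsingle : ∀ b, φ (Pi.single b (v b i)) = φ (Pi.single b 1) * v b i := fun b => by
        rw [mul_comm, ← smul_eq_mul, ← map_smul, ← Pi.single_smul', smul_eq_mul, mul_one]
      simpa [ev, hsingle] using hi
    refine hφ (LinearMap.pi_ext' fun b => LinearMap.ext_ring ?_)
    simpa using Fintype.linearIndependent_iff.mp hv _ hrel b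
  obtain ⟨s, hs_sub, hs_span, hs_ind⟩ := exists_linearIndependent K (Set.range ev)
  let B := Module.Basis.mk hs_ind (by rw [Subtype.range_coe, hs_span, hspan])
  have := Module.Finite.finite_basis B
  have : Fintype s := Fintype.ofFinite s
  have hcard : Fintype.card κ = Fintype.card s := by
    rw [← Module.finrank_fintype_fun_eq_card K, Module.finrank_eq_card_basis B]
  let e : κ ≃ s := Fintype.equivOfCardEq hcard
  choose t ht using fun a => hs_sub (e a).2
  have hrows : (fun a b => v b (t a)) = (↑) ∘ e := funext ht
  exact ⟨t, hrows ▸ hs_ind.comp e e.injective⟩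

def AddMonoidHom.toDerivation {S L : Type*} [CommRing S] [CommRing L] [Algebra S L] (d : L →+ L)
    (hleib : ∀ b c, d (b * c) = d b * c + b * d c) (hS : ∀ c : S, d (algebraMap S L c) = 0) :
    Derivation S L L where
  toFun := d
  map_add' := map_add d
  map_smul' c y := by
    simp only [Algebra.smul_def, hleib, hS, zero_mul, zero_add, RingHom.id_apply]
  map_one_eq_zero' := by simpa using hleib 1 1
  leibniz' b c := by
    change d (b * c) = b * d c + c * d b
    rw [hleib]
    ring

theorem trdeg_eq_algebra_trdeg (R A : Type*) [CommRing R] [CommRing A] [Algebra R A] :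
    trdeg R A = Algebra.trdeg R A :=
  rfl

theorem stmt7_general (L : Type*) [Field L] [Algebra ℂ L]
    (br : L →ₗ[ℂ] L →ₗ[ℂ] L)
    (hanti : ∀ a b : L, br a b = - br b a)
    (hleib : ∀ a b c : L, br a (b * c) = br a b * c + b * br a c)
    (m : ℕ) (f : Fin m → L)
    (hham : LinearIndependent L (fun j : Fin m => br (f j)))
    (F : IntermediateField ℂ L)
    (hF : (F : Set L) = {a : L | ∀ b : L, br a b = 0}) :
    trdeg ℂ F + (m : Cardinal) ≤ trdeg ℂ L := by
  have : CharZero F := charZero_of_injective_algebraMap (algebraMap ℂ F).injective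
  have hcentral (j : Fin m) (c : F) : br (f j) c = 0 := by
    have hc : (c : L) ∈ (F : Set L) := c.2
    rw [hF] at hc
    rw [hanti, hc, neg_zero]
  let D (j : Fin m) : Derivation F L L :=
    (br (f j)).toAddMonoidHom.toDerivation (hleib (f j)) (hcentral j)
  obtain ⟨t, ht⟩ := (hham.map' (LinearMap.ltoFun ℂ L L L)
    (LinearMap.ker_eq_bot.mpr DFunLike.coe_injective)).exists_linearIndependent_eval
  have hm : (m : Cardinal) ≤ Algebra.trdeg F L := by
    simpa using
      (algebraicIndependent_of_linearIndependent_derivation_apply D ht).lift_cardinalMk_le_trdeg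
  rw [trdeg_eq_algebra_trdeg, trdeg_eq_algebra_trdeg]
  calc Algebra.trdeg ℂ F + m ≤ Algebra.trdeg ℂ F + Algebra.trdeg F L := by gcongr
    _ ≤ Algebra.trdeg ℂ L := trdeg_add_le

/-- Let `L` be a finitely generated field extension of `ℂ` with a Poisson bracket
(ℂ-bilinear, antisymmetric, Jacobi, Leibniz).  If there are `f_1, …, f_m ∈ L` whose
Hamiltonian derivations `{f_j, ·}` are linearly independent over `L`, then the
transcendence degree over `ℂ` of the Poisson center of `L` is at most
`trdeg_ℂ L - m`. -/
theorem stmt7 (L : Type*) [Field L] [Algebra ℂ L]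
    (hfg : (⊤ : IntermediateField ℂ L).FG)
    (br : L →ₗ[ℂ] L →ₗ[ℂ] L)
    (hanti : ∀ a b : L, br a b = - br b a)
    (hjac : ∀ a b c : L, br a (br b c) + br b (br c a) + br c (br a b) = 0)
    (hleib : ∀ a b c : L, br a (b * c) = br a b * c + b * br a c)
    (m : ℕ) (f : Fin m → L)
    (hham : LinearIndependent L (fun j : Fin m => br (f j)))
    (F : IntermediateField ℂ L)
    (hF : (F : Set L) = {a : L | ∀ b : L, br a b = 0}) :
    trdeg ℂ F + (m : Cardinal) ≤ trdeg ℂ L :=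
  stmt7_general L br hanti hleib m f hham F hF
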